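/- (Theorem 1, predictive identification of the average causal effect.) Under the sensitivity parametrization, τ = E[Z·Y + (1−Z)·μ1(X)/ε1(X)] − E[Z·μ0(X)·ε0(X) + (1−Z)·Y]. -/

import Mathlib

/-!
Split `E[Y(1)]` over the two arms: `E[Z·Y(1)] = E[Z·Y]` is observed. For the other arm, the tower
property and pulling out the `X`-measurable factor give `E[(1-Z)·μ₁/ε₁] = E[(1-e)·μ₁/ε₁]`, and
substituting `E[Z·Y(1) | X] = μ₁·e` into the sensitivity relation and dividing by `ε₁·e` shows
`(1-e)·μ₁/ε₁ = E[(1-Z)·Y(1) | X]`. Symmetrically `e·μ₀·ε₀ = E[Z·Y(0) | X]` after dividing by `1-e`.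
-/

open MeasureTheory

namespace MeasureTheory

variable {Ω : Type*} {m m₀ : MeasurableSpace Ω} {μ : Measure Ω}

theorem condExp_one_sub [IsFiniteMeasure μ] (hm : m ≤ m₀) {f : Ω → ℝ} (hf : Integrable f μ) :
    μ[fun ω => 1 - f ω|m] =ᵐ[μ] fun ω => 1 - μ[f|m] ω := by
  filter_upwards [condExp_sub (integrable_const (1 : ℝ)) hf m] with ω hω
  rw [Pi.sub_apply, condExp_const hm] at hω
  exact hω

theorem integral_mul_eq_of_condExp_mul_eq (hm : m ≤ m₀) [SigmaFinite (μ.trim hm)]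
    {W g V : Ω → ℝ} (hg : StronglyMeasurable[m] g) (hW : Integrable W μ)
    (hWg : Integrable (fun ω => W ω * g ω) μ)
    (h : (fun ω => μ[W|m] ω * g ω) =ᵐ[μ] μ[fun ω => W ω * V ω|m]) :
    ∫ ω, W ω * g ω ∂μ = ∫ ω, W ω * V ω ∂μ :=
  calc ∫ ω, W ω * g ω ∂μ = ∫ ω, μ[W * g|m] ω ∂μ := (integral_condExp hm).symm
    _ = ∫ ω, μ[fun ω => W ω * V ω|m] ω ∂μ :=
      integral_congr_ae ((condExp_mul_of_stronglyMeasurable_right hg hWg hW).trans h)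
    _ = ∫ ω, W ω * V ω ∂μ := integral_condExp hm

end MeasureTheory

section BinaryTreatment

variable {Ω : Type*} {m mΩ : MeasurableSpace Ω} {μ : Measure Ω} {Z : Ω → ℝ}

theorem one_sub_eq_zero_or_eq_one (hZ : ∀ ω, Z ω = 0 ∨ Z ω = 1) (ω : Ω) :
    1 - Z ω = 0 ∨ 1 - Z ω = 1 := by
  rcases hZ ω with h | h <;> simp [h]

theorem mul_observed_eq {Y Y1 Y0 : Ω → ℝ} (hZ : ∀ ω, Z ω = 0 ∨ Z ω = 1)
    (hY : ∀ ω, Y ω = Z ω * Y1 ω + (1 - Z ω) * Y0 ω) (ω : Ω) : Z ω * Y ω = Z ω * Y1 ω := by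
  rcases hZ ω with h | h <;> simp [hY, h]

theorem one_sub_mul_observed_eq {Y Y1 Y0 : Ω → ℝ} (hZ : ∀ ω, Z ω = 0 ∨ Z ω = 1)
    (hY : ∀ ω, Y ω = Z ω * Y1 ω + (1 - Z ω) * Y0 ω) (ω : Ω) :
    (1 - Z ω) * Y ω = (1 - Z ω) * Y0 ω := by
  rcases hZ ω with h | h <;> simp [hY, h]

theorem integrable_mul_of_eq_zero_or_eq_one (hZm : AEStronglyMeasurable Z μ)
    (hZ : ∀ ω, Z ω = 0 ∨ Z ω = 1) {f : Ω → ℝ} (hf : Integrable f μ) :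
    Integrable (fun ω => Z ω * f ω) μ :=
  hf.bdd_mul hZm (c := 1) (.of_forall fun ω => by rcases hZ ω with h | h <;> simp [h])

theorem integrable_one_sub_mul_of_eq_zero_or_eq_one (hZm : AEStronglyMeasurable Z μ)
    (hZ : ∀ ω, Z ω = 0 ∨ Z ω = 1) {f : Ω → ℝ} (hf : Integrable f μ) :
    Integrable (fun ω => (1 - Z ω) * f ω) μ :=
  integrable_mul_of_eq_zero_or_eq_one (aestronglyMeasurable_const.sub hZm)
    (one_sub_eq_zero_or_eq_one hZ) hf

theorem integrable_of_eq_zero_or_eq_one [IsFiniteMeasure μ] (hZm : AEStronglyMeasurable Z μ)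
    (hZ : ∀ ω, Z ω = 0 ∨ Z ω = 1) : Integrable Z μ := by
  simpa using integrable_mul_of_eq_zero_or_eq_one hZm hZ (integrable_const (1 : ℝ))

theorem integral_eq_integral_mul_add_integral_one_sub_mul (hZm : AEStronglyMeasurable Z μ)
    (hZ : ∀ ω, Z ω = 0 ∨ Z ω = 1) {f : Ω → ℝ} (hf : Integrable f μ) :
    ∫ ω, f ω ∂μ = ∫ ω, Z ω * f ω ∂μ + ∫ ω, (1 - Z ω) * f ω ∂μ := by
  rw [← integral_add (integrable_mul_of_eq_zero_or_eq_one hZm hZ hf)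
    (integrable_one_sub_mul_of_eq_zero_or_eq_one hZm hZ hf)]
  congr with ω
  ring

variable [IsFiniteMeasure μ] {V e mu ε : Ω → ℝ}

theorem integral_eq_of_treated_sensitivity (hm : m ≤ mΩ)
    (hZm : AEStronglyMeasurable Z μ) (hZ : ∀ ω, Z ω = 0 ∨ Z ω = 1) (hV : Integrable V μ)
    (he : e =ᵐ[μ] μ[Z|m]) (he0 : ∀ᵐ ω ∂μ, e ω ≠ 0)
    (hmu : (fun ω => mu ω * e ω) =ᵐ[μ] μ[fun ω => Z ω * V ω|m])
    (hmu_meas : Measurable[m] mu) (hε_meas : Measurable[m] ε) (hε : ∀ᵐ ω ∂μ, ε ω ≠ 0)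
    (hsens : ∀ᵐ ω ∂μ, (1 - e ω) * μ[fun ω' => Z ω' * V ω'|m] ω
      = ε ω * e ω * μ[fun ω' => (1 - Z ω') * V ω'|m] ω)
    (hint : Integrable (fun ω => Z ω * V ω + (1 - Z ω) * (mu ω / ε ω)) μ) :
    ∫ ω, V ω ∂μ = ∫ ω, (Z ω * V ω + (1 - Z ω) * (mu ω / ε ω)) ∂μ := by
  have hZV := integrable_mul_of_eq_zero_or_eq_one hZm hZ hV
  have hg : Integrable (fun ω => (1 - Z ω) * (mu ω / ε ω)) μ :=
    (hint.sub hZV).congr (.of_forall fun ω => by simp)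
  have hce : (fun ω => μ[fun ω => 1 - Z ω|m] ω * (mu ω / ε ω))
      =ᵐ[μ] μ[fun ω => (1 - Z ω) * V ω|m] := by
    filter_upwards [condExp_one_sub hm (integrable_of_eq_zero_or_eq_one hZm hZ), he, he0, hε,
      hmu, hsens] with ω h1Zω heω he0ω hεω hmuω hsensω
    rw [← hmuω] at hsensω
    rw [h1Zω, ← heω, mul_div_assoc', div_eq_iff hεω]
    exact mul_left_cancel₀ he0ω (by linear_combination hsensω)
  have h1Z : Integrable (fun ω => 1 - Z ω) μ :=
    (integrable_const 1).sub (integrable_of_eq_zero_or_eq_one hZm hZ)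
  rw [integral_add hZV hg, integral_mul_eq_of_condExp_mul_eq hm
    (g := fun ω => mu ω / ε ω) (hmu_meas.div hε_meas).stronglyMeasurable h1Z hg hce]
  exact integral_eq_integral_mul_add_integral_one_sub_mul hZm hZ hV

theorem integral_eq_of_control_sensitivity (hm : m ≤ mΩ)
    (hZm : AEStronglyMeasurable Z μ) (hZ : ∀ ω, Z ω = 0 ∨ Z ω = 1) (hV : Integrable V μ)
    (he : e =ᵐ[μ] μ[Z|m]) (he1 : ∀ᵐ ω ∂μ, e ω ≠ 1)
    (hmu : (fun ω => mu ω * (1 - e ω)) =ᵐ[μ] μ[fun ω => (1 - Z ω) * V ω|m])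
    (hmu_meas : Measurable[m] mu) (hε_meas : Measurable[m] ε)
    (hsens : ∀ᵐ ω ∂μ, (1 - e ω) * μ[fun ω' => Z ω' * V ω'|m] ω
      = ε ω * e ω * μ[fun ω' => (1 - Z ω') * V ω'|m] ω)
    (hint : Integrable (fun ω => Z ω * (mu ω * ε ω) + (1 - Z ω) * V ω) μ) :
    ∫ ω, V ω ∂μ = ∫ ω, (Z ω * (mu ω * ε ω) + (1 - Z ω) * V ω) ∂μ := by
  have h1ZV := integrable_one_sub_mul_of_eq_zero_or_eq_one hZm hZ hV
  have hg : Integrable (fun ω => Z ω * (mu ω * ε ω)) μ :=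
    (hint.sub h1ZV).congr (.of_forall fun ω => by simp)
  have hce : (fun ω => μ[Z|m] ω * (mu ω * ε ω)) =ᵐ[μ] μ[fun ω => Z ω * V ω|m] := by
    filter_upwards [he, he1, hmu, hsens] with ω heω he1ω hmuω hsensω
    rw [← hmuω] at hsensω
    rw [← heω]
    exact mul_left_cancel₀ (sub_ne_zero.2 he1ω.symm) (by linear_combination (-1) * hsensω)
  rw [integral_add hg h1ZV, integral_mul_eq_of_condExp_mul_eq hm (g := fun ω => mu ω * ε ω)
    (hmu_meas.mul hε_meas).stronglyMeasurable (integrable_of_eq_zero_or_eq_one hZm hZ) hg hce]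
  exact integral_eq_integral_mul_add_integral_one_sub_mul hZm hZ hV

end BinaryTreatment

theorem predictive_identification_ate_general
    {Ω : Type*} [F : MeasurableSpace Ω] (P : Measure Ω) [IsProbabilityMeasure P]
    (Z Y1 Y0 Y : Ω → ℝ)
    (hZmeas : Measurable Z) (hZ01 : ∀ ω, Z ω = 0 ∨ Z ω = 1)
    (hY1int : Integrable Y1 P) (hY0int : Integrable Y0 P)
    (hYdef : ∀ ω, Y ω = Z ω * Y1 ω + (1 - Z ω) * Y0 ω)
    (mX : MeasurableSpace Ω) (hmX : mX ≤ F)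
    (eX : Ω → ℝ) (heX : eX =ᵐ[P] P[Z|mX])
    (hov : ∀ᵐ ω ∂P, 0 < eX ω ∧ eX ω < 1)
    (mu1 mu0 : Ω → ℝ) (hmu1meas : Measurable[mX] mu1) (hmu0meas : Measurable[mX] mu0)
    (hmu1 : (fun ω => mu1 ω * eX ω) =ᵐ[P] P[fun ω => Z ω * Y ω|mX])
    (hmu0 : (fun ω => mu0 ω * (1 - eX ω)) =ᵐ[P] P[fun ω => (1 - Z ω) * Y ω|mX])
    (eps1 eps0 : Ω → ℝ)
    (heps1meas : Measurable[mX] eps1) (heps0meas : Measurable[mX] eps0)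
    (heps1pos : ∀ᵐ ω ∂P, 0 < eps1 ω)
    (hsens1 : ∀ᵐ ω ∂P, (1 - eX ω) * (P[fun ω' => Z ω' * Y1 ω'|mX]) ω
        = eps1 ω * eX ω * (P[fun ω' => (1 - Z ω') * Y1 ω'|mX]) ω)
    (hsens0 : ∀ᵐ ω ∂P, (1 - eX ω) * (P[fun ω' => Z ω' * Y0 ω'|mX]) ω
        = eps0 ω * eX ω * (P[fun ω' => (1 - Z ω') * Y0 ω'|mX]) ω)
    (hint1 : Integrable (fun ω => Z ω * Y ω + (1 - Z ω) * (mu1 ω / eps1 ω)) P)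
    (hint2 : Integrable (fun ω => Z ω * (mu0 ω * eps0 ω) + (1 - Z ω) * Y ω) P) :
    ∫ ω, Y1 ω ∂P - ∫ ω, Y0 ω ∂P
      = ∫ ω, (Z ω * Y ω + (1 - Z ω) * (mu1 ω / eps1 ω)) ∂P
        - ∫ ω, (Z ω * (mu0 ω * eps0 ω) + (1 - Z ω) * Y ω) ∂P := by
  simp_rw [mul_observed_eq hZ01 hYdef, one_sub_mul_observed_eq hZ01 hYdef]
    at hmu1 hmu0 hint1 hint2 ⊢
  rw [integral_eq_of_treated_sensitivity hmX hZmeas.aestronglyMeasurable hZ01 hY1int heX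
      (hov.mono fun _ h => h.1.ne') hmu1 hmu1meas heps1meas (heps1pos.mono fun _ h => h.ne')
      hsens1 hint1,
    integral_eq_of_control_sensitivity hmX hZmeas.aestronglyMeasurable hZ01 hY0int heX
      (hov.mono fun _ h => h.2.ne) hmu0 hmu0meas heps0meas hsens0 hint2]

/-- Theorem 1 (predictive identification of the average causal effect). -/
theorem predictive_identification_ate
    {Ω : Type*} [F : MeasurableSpace Ω] (P : Measure Ω) [IsProbabilityMeasure P]
    (Z Y1 Y0 Y : Ω → ℝ)
    (hZmeas : Measurable Z) (hZ01 : ∀ ω, Z ω = 0 ∨ Z ω = 1)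
    (hY1int : Integrable Y1 P) (hY0int : Integrable Y0 P)
    (hYdef : ∀ ω, Y ω = Z ω * Y1 ω + (1 - Z ω) * Y0 ω)
    (mX : MeasurableSpace Ω) (hmX : mX ≤ F)
    (eX : Ω → ℝ) (heXmeas : Measurable[mX] eX) (heX : eX =ᵐ[P] P[Z|mX])
    (hov : ∀ᵐ ω ∂P, 0 < eX ω ∧ eX ω < 1)
    (mu1 mu0 : Ω → ℝ) (hmu1meas : Measurable[mX] mu1) (hmu0meas : Measurable[mX] mu0)
    (hmu1 : (fun ω => mu1 ω * eX ω) =ᵐ[P] P[fun ω => Z ω * Y ω|mX])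
    (hmu0 : (fun ω => mu0 ω * (1 - eX ω)) =ᵐ[P] P[fun ω => (1 - Z ω) * Y ω|mX])
    (eps1 eps0 : Ω → ℝ)
    (heps1meas : Measurable[mX] eps1) (heps0meas : Measurable[mX] eps0)
    (heps1pos : ∀ᵐ ω ∂P, 0 < eps1 ω) (heps0pos : ∀ᵐ ω ∂P, 0 < eps0 ω)
    (hsens1 : ∀ᵐ ω ∂P, (1 - eX ω) * (P[fun ω' => Z ω' * Y1 ω'|mX]) ω
        = eps1 ω * eX ω * (P[fun ω' => (1 - Z ω') * Y1 ω'|mX]) ω)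
    (hsens0 : ∀ᵐ ω ∂P, (1 - eX ω) * (P[fun ω' => Z ω' * Y0 ω'|mX]) ω
        = eps0 ω * eX ω * (P[fun ω' => (1 - Z ω') * Y0 ω'|mX]) ω)
    (hint1 : Integrable (fun ω => Z ω * Y ω + (1 - Z ω) * (mu1 ω / eps1 ω)) P)
    (hint2 : Integrable (fun ω => Z ω * (mu0 ω * eps0 ω) + (1 - Z ω) * Y ω) P) :
    ∫ ω, Y1 ω ∂P - ∫ ω, Y0 ω ∂P
      = ∫ ω, (Z ω * Y ω + (1 - Z ω) * (mu1 ω / eps1 ω)) ∂P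
        - ∫ ω, (Z ω * (mu0 ω * eps0 ω) + (1 - Z ω) * Y ω) ∂P :=
  predictive_identification_ate_general (F := F) P Z Y1 Y0 Y hZmeas hZ01 hY1int hY0int hYdef mX hmX
    eX heX hov mu1 mu0 hmu1meas hmu0meas hmu1 hmu0 eps1 eps0 heps1meas heps0meas heps1pos hsens1
    hsens0 hint1 hint2
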